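/- Let N be odd, a and b binary sequences of period N, η an integer, and w the 4-column interleaved sequence of period 4N with columns (a, L^η(ā), b, L^η(b)). Write τ = 4τ₁+τ₂, 0 ≤ τ₂ ≤ 3. Then R_w(τ) = 2R_a(τ₁)+2R_b(τ₁) if τ₂=0, and R_w(τ) = 0 if τ₂=2. -/

import Mathlib

/-!
Cutting a period of `w` into blocks of four, a shift by `4τ₁ + τ₂` pairs column `j`
with column `j + τ₂`, shifted by `τ₁`, or by `τ₁ + 1` when `j + τ₂` wraps past `3`;
so `R_w(τ)` is a sum of four cross-correlations of the columns. A correlation is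
unchanged by a common shift of both sequences and changes sign when one of them is
complemented. For `τ₂ = 0` the columns `L^η(ā)` and `L^η(b)` therefore contribute
`R_a(τ₁)` and `R_b(τ₁)` once more, while for `τ₂ = 2` the four terms cancel in pairs.
-/

/-- Periodic cross-correlation of binary sequences of period `M`. -/
def corr (M : ℕ) (x y : ZMod M → ZMod 2) (τ : ZMod M) : ℤ :=
  ∑ t ∈ Finset.range M, (-1 : ℤ) ^ ((x (t : ZMod M)).val + (y ((t : ZMod M) + τ)).val)

/-- 4-column interleaving: `v(4i+j)` is the `j`-th column evaluated at `i`. -/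
def il4 (N : ℕ) (a b c d : ZMod N → ZMod 2) : ZMod (4 * N) → ZMod 2 :=
  fun t => if t.val % 4 = 0 then a ((t.val / 4 : ℕ) : ZMod N)
           else if t.val % 4 = 1 then b ((t.val / 4 : ℕ) : ZMod N)
           else if t.val % 4 = 2 then c ((t.val / 4 : ℕ) : ZMod N)
           else d ((t.val / 4 : ℕ) : ZMod N)

lemma corr_eq_sum_univ {M : ℕ} [NeZero M] (x y : ZMod M → ZMod 2) (τ : ZMod M) :
    corr M x y τ = ∑ t : ZMod M, (-1 : ℤ) ^ ((x t).val + (y (t + τ)).val) :=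
  Finset.sum_nbij' (fun t => (t : ZMod M)) ZMod.val (by simp) (by simp [ZMod.val_lt])
    (fun t ht => by simpa using Nat.mod_eq_of_lt (Finset.mem_range.mp ht)) (by simp) (by simp)

lemma corr_comp_add_right {M : ℕ} [NeZero M] (x y : ZMod M → ZMod 2) (η τ : ZMod M) :
    corr M (fun t => x (t + η)) (fun t => y (t + η)) τ = corr M x y τ := by
  simp only [corr_eq_sum_univ, add_right_comm _ τ η]
  exact Equiv.sum_comp (Equiv.addRight η) (fun t => (-1 : ℤ) ^ ((x t).val + (y (t + τ)).val))

lemma corr_one_sub_left {M : ℕ} (x y : ZMod M → ZMod 2) (τ : ZMod M) :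
    corr M (fun t => 1 - x t) y τ = -corr M x y τ := by
  have key : ∀ u v : ZMod 2, (-1 : ℤ) ^ ((1 - u).val + v.val) = -(-1) ^ (u.val + v.val) := by
    decide
  simp only [corr, key, Finset.sum_neg_distrib]

lemma corr_one_sub_right {M : ℕ} (x y : ZMod M → ZMod 2) (τ : ZMod M) :
    corr M x (fun t => 1 - y t) τ = -corr M x y τ := by
  have key : ∀ u v : ZMod 2, (-1 : ℤ) ^ (u.val + (1 - v).val) = -(-1) ^ (u.val + v.val) := by
    decide
  simp only [corr, key, Finset.sum_neg_distrib]

lemma il4_natCast (N : ℕ) (a b c d : ZMod N → ZMod 2) (n : ℕ) :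
    il4 N a b c d n =
      if n % 4 = 0 then a ((n / 4 : ℕ) : ZMod N)
      else if n % 4 = 1 then b ((n / 4 : ℕ) : ZMod N)
      else if n % 4 = 2 then c ((n / 4 : ℕ) : ZMod N)
      else d ((n / 4 : ℕ) : ZMod N) := by
  have hdiv : n / 4 = N * (n / (4 * N)) + n % (4 * N) / 4 := by
    conv_lhs => rw [← Nat.div_add_mod n (4 * N), mul_assoc, Nat.mul_add_div four_pos]
  have hcast : ((n % (4 * N) / 4 : ℕ) : ZMod N) = ((n / 4 : ℕ) : ZMod N) := by
    simp [hdiv]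
  rw [il4, ZMod.val_natCast, Nat.mod_mod_of_dvd n (dvd_mul_right 4 N), hcast]

lemma il4_four_mul (N : ℕ) (a b c d : ZMod N → ZMod 2) (q : ℕ) :
    il4 N a b c d ((4 * q : ℕ) : ZMod (4 * N)) = a q := by
  rw [il4_natCast]; simp

lemma il4_four_mul_add_one (N : ℕ) (a b c d : ZMod N → ZMod 2) (q : ℕ) :
    il4 N a b c d ((4 * q + 1 : ℕ) : ZMod (4 * N)) = b q := by
  rw [il4_natCast]; simp [Nat.mul_add_div]

lemma il4_four_mul_add_two (N : ℕ) (a b c d : ZMod N → ZMod 2) (q : ℕ) :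
    il4 N a b c d ((4 * q + 2 : ℕ) : ZMod (4 * N)) = c q := by
  rw [il4_natCast]; simp [Nat.mul_add_div]

lemma il4_four_mul_add_three (N : ℕ) (a b c d : ZMod N → ZMod 2) (q : ℕ) :
    il4 N a b c d ((4 * q + 3 : ℕ) : ZMod (4 * N)) = d q := by
  rw [il4_natCast]; simp [Nat.mul_add_div]

lemma Finset.sum_range_four_mul {M : Type*} [AddCommMonoid M] (f : ℕ → M) (N : ℕ) :
    ∑ t ∈ range (4 * N), f t =
      ∑ i ∈ range N, (f (4 * i) + f (4 * i + 1) + f (4 * i + 2) + f (4 * i + 3)) := by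
  induction N with
  | zero => simp
  | succ n ih =>
    rw [sum_range_succ _ n, ← ih, show 4 * (n + 1) = 4 * n + 3 + 1 by ring]
    simp only [sum_range_succ]
    abel

lemma corr_il4_natCast_four_mul (N : ℕ) (a b c d a' b' c' d' : ZMod N → ZMod 2)
    (m : ℕ) :
    corr (4 * N) (il4 N a b c d) (il4 N a' b' c' d') ((4 * m : ℕ) : ZMod (4 * N)) =
      corr N a a' m + corr N b b' m + corr N c c' m + corr N d d' m := by
  simp only [corr, ← Nat.cast_add, Finset.sum_range_four_mul, ← Finset.sum_add_distrib]
  refine Finset.sum_congr rfl fun i _ => ?_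
  rw [show 4 * i + 4 * m = 4 * (i + m) by ring,
    show 4 * i + 1 + 4 * m = 4 * (i + m) + 1 by ring,
    show 4 * i + 2 + 4 * m = 4 * (i + m) + 2 by ring,
    show 4 * i + 3 + 4 * m = 4 * (i + m) + 3 by ring]
  simp only [il4_four_mul, il4_four_mul_add_one, il4_four_mul_add_two, il4_four_mul_add_three]

lemma corr_il4_natCast_four_mul_add_two (N : ℕ) (a b c d a' b' c' d' : ZMod N → ZMod 2)
    (m : ℕ) :
    corr (4 * N) (il4 N a b c d) (il4 N a' b' c' d') ((4 * m + 2 : ℕ) : ZMod (4 * N)) =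
      corr N a c' m + corr N b d' m + corr N c a' (m + 1 : ℕ) + corr N d b' (m + 1 : ℕ) := by
  simp only [corr, ← Nat.cast_add, Finset.sum_range_four_mul, ← Finset.sum_add_distrib]
  refine Finset.sum_congr rfl fun i _ => ?_
  rw [show 4 * i + (4 * m + 2) = 4 * (i + m) + 2 by ring,
    show 4 * i + 1 + (4 * m + 2) = 4 * (i + m) + 3 by ring,
    show 4 * i + 2 + (4 * m + 2) = 4 * (i + (m + 1)) by ring,
    show 4 * i + 3 + (4 * m + 2) = 4 * (i + (m + 1)) + 1 by ring]
  simp only [il4_four_mul, il4_four_mul_add_one, il4_four_mul_add_two, il4_four_mul_add_three]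

lemma intCast_four_mul_add (N : ℕ) [NeZero N] (τ₁ : ℤ) (s : ℕ) :
    ((4 * τ₁ + s : ℤ) : ZMod (4 * N)) = ((4 * (τ₁ : ZMod N).val + s : ℕ) : ZMod (4 * N)) := by
  have hval : ((τ₁ : ZMod N).val : ℤ) ≡ τ₁ [ZMOD N] :=
    (ZMod.intCast_eq_intCast_iff _ _ _).mp (by simp)
  have h4 : 4 * ((τ₁ : ZMod N).val : ℤ) + s ≡ 4 * τ₁ + s [ZMOD (4 * N : ℕ)] := by
    exact_mod_cast (hval.mul_left' (c := 4)).add_right (s : ℤ)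
  exact_mod_cast ((ZMod.intCast_eq_intCast_iff _ _ _).mpr h4).symm

theorem stmt_18_general (N : ℕ) (a b : ZMod N → ZMod 2) (η : ℤ)
    (w : ZMod (4 * N) → ZMod 2)
    (hw : w = il4 N a (fun i => 1 - a (i + (η : ZMod N))) b (fun i => b (i + (η : ZMod N))))
    (τ τ₁ τ₂ : ℤ) (hτ : τ = 4 * τ₁ + τ₂) :
    (τ₂ = 0 →
      corr (4 * N) w w (τ : ZMod (4 * N)) =
        2 * corr N a a (τ₁ : ZMod N) + 2 * corr N b b (τ₁ : ZMod N)) ∧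
    (τ₂ = 2 → corr (4 * N) w w (τ : ZMod (4 * N)) = 0) := by
  subst hw hτ
  rcases N.eq_zero_or_pos with rfl | hN
  · simp [corr]
  have : NeZero N := ⟨hN.ne'⟩
  refine ⟨fun h => ?_, fun h => ?_⟩
  · rw [h, show (0 : ℤ) = ((0 : ℕ) : ℤ) from rfl, intCast_four_mul_add, add_zero,
      corr_il4_natCast_four_mul, ZMod.natCast_zmod_val]
    simp only [corr_comp_add_right, corr_one_sub_left, corr_one_sub_right, neg_neg]
    ring
  · rw [h, show (2 : ℤ) = ((2 : ℕ) : ℤ) from rfl, intCast_four_mul_add,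
      corr_il4_natCast_four_mul_add_two]
    simp only [corr_comp_add_right, corr_one_sub_left, corr_one_sub_right]
    ring

theorem stmt_18 (N : ℕ) (hN : Odd N) (a b : ZMod N → ZMod 2) (η : ℤ)
    (w : ZMod (4 * N) → ZMod 2)
    (hw : w = il4 N a (fun i => 1 - a (i + (η : ZMod N))) b (fun i => b (i + (η : ZMod N))))
    (τ τ₁ τ₂ : ℤ) (hτ : τ = 4 * τ₁ + τ₂) (hτ₂ : 0 ≤ τ₂ ∧ τ₂ ≤ 3) :
    (τ₂ = 0 →
      corr (4 * N) w w (τ : ZMod (4 * N)) =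
        2 * corr N a a (τ₁ : ZMod N) + 2 * corr N b b (τ₁ : ZMod N)) ∧
    (τ₂ = 2 → corr (4 * N) w w (τ : ZMod (4 * N)) = 0) :=
  stmt_18_general N a b η w hw τ τ₁ τ₂ hτ
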